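/- For Re(s) > 0, 2 Γ(s) L(s) = ∫_0^∞ x^{s-1} / cosh(x) dx, where L(s) = Σ_{n≥0} (-1)^n/(2n+1)^s is the Dirichlet L-function of the nontrivial character mod 4. -/

import Mathlib

/-!
Expanding `1 / cosh x = 2 e^{-x} / (1 + e^{-2x})` as a geometric series gives
`1 / cosh x = 2 ∑ (-1)^n e^{-(2n+1)x}` for `x > 0`, and integrating termwise against `x^{s-1}`
gives `2 Γ(s) ∑ (-1)^n (2n+1)^{-s}` for `Re s > 1`. Both sides are holomorphic on `Re s > 0`
(the Mellin transform because `1 / cosh` is bounded near `0` and decays exponentially), so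
the identity theorem extends the equality to the whole half-plane.
-/

open MeasureTheory

section

open Complex Set Filter Topology

lemma Real.hasSum_inv_cosh {t : ℝ} (ht : 0 < t) :
    HasSum (fun n : ℕ ↦ 2 * (-1) ^ n * Real.exp (-(2 * n + 1) * t)) (Real.cosh t)⁻¹ := by
  have hr : ‖-Real.exp (-(2 * t))‖ < 1 := by
    rw [norm_neg, Real.norm_of_nonneg (Real.exp_pos _).le, Real.exp_lt_one_iff]
    linarith
  have hval : 2 * Real.exp (-t) * (1 - -Real.exp (-(2 * t)))⁻¹ = (Real.cosh t)⁻¹ := by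
    rw [Real.cosh_eq, sub_neg_eq_add]
    field_simp
    rw [mul_add, ← Real.exp_add, ← Real.exp_add]
    ring_nf
    rw [Real.exp_zero]
  have h := (hasSum_geometric_of_norm_lt_one hr).mul_left (2 * Real.exp (-t))
  rw [hval] at h
  refine h.congr_fun fun n ↦ ?_
  have hexp : Real.exp (-(2 * n + 1) * t) = Real.exp (-t) * Real.exp (-(2 * t)) ^ n := by
    rw [← Real.exp_nat_mul, ← Real.exp_add]
    ring_nf
  rw [hexp, neg_pow]
  ring

lemma Complex.hasSum_inv_cosh_ofReal {t : ℝ} (ht : 0 < t) :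
    HasSum (fun n : ℕ ↦ (2 * (-1) ^ n : ℂ) * Real.exp (-(2 * n + 1) * t)) (cosh t)⁻¹ := by
  rw [← ofReal_cosh, ← ofReal_inv]
  exact_mod_cast hasSum_ofReal.mpr (Real.hasSum_inv_cosh ht)

lemma Real.summable_inv_two_mul_add_one_rpow {σ : ℝ} (hσ : 1 < σ) :
    Summable fun n : ℕ ↦ ((2 * n + 1 : ℝ) ^ σ)⁻¹ := by
  have hshift : Summable fun n : ℕ ↦ (((n + 1 : ℕ) : ℝ) ^ σ)⁻¹ :=
    (summable_nat_add_iff 1).mpr (summable_nat_rpow_inv.mpr hσ)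
  refine hshift.of_nonneg_of_le (fun n ↦ by positivity) fun n ↦ ?_
  push_cast
  gcongr
  linarith [n.cast_nonneg (α := ℝ)]

lemma mellin_inv_cosh_eq_tsum {s : ℂ} (hs : 1 < s.re) :
    mellin (fun x : ℝ ↦ (cosh (x : ℂ))⁻¹) s
      = 2 * Gamma s * ∑' n : ℕ, (-1) ^ n / ((2 * n + 1 : ℕ) : ℂ) ^ s := by
  have hsum : Summable fun n : ℕ ↦ ‖(2 * (-1) ^ n : ℂ)‖ / (2 * n + 1 : ℝ) ^ s.re := by
    simpa [div_eq_mul_inv] using (Real.summable_inv_two_mul_add_one_rpow hs).mul_left 2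
  have := hasSum_mellin (fun n ↦ Or.inr (by positivity)) (by linarith)
    (fun t ht ↦ hasSum_inv_cosh_ofReal ht) hsum
  rw [← this.tsum_eq, ← tsum_mul_left]
  congr 1 with n
  push_cast
  ring

lemma Real.inv_cosh_le_two_mul_exp_neg (x : ℝ) : (Real.cosh x)⁻¹ ≤ 2 * Real.exp (-x) := by
  rw [inv_le_iff_one_le_mul₀' (Real.cosh_pos x), Real.cosh_eq, Real.exp_neg]
  have := Real.exp_pos x
  field_simp
  nlinarith [Real.exp_pos (-x)]

lemma differentiableOn_mellin_inv_cosh :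
    DifferentiableOn ℂ (mellin fun x : ℝ ↦ (cosh (x : ℂ))⁻¹) {s | 0 < s.re} := by
  have hnorm (x : ℝ) : ‖(cosh (x : ℂ))⁻¹‖ = (Real.cosh x)⁻¹ := by
    rw [← ofReal_cosh, ← ofReal_inv, norm_real,
      Real.norm_of_nonneg (inv_nonneg.mpr (Real.cosh_pos x).le)]
  have hcont : Continuous fun x : ℝ ↦ (cosh (x : ℂ))⁻¹ :=
    (continuous_cosh.comp continuous_ofReal).inv₀ fun x ↦ by
      rw [Function.comp_apply, ← ofReal_cosh]; exact ofReal_ne_zero.mpr (Real.cosh_pos x).ne'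
  have htop : (fun x : ℝ ↦ (cosh (x : ℂ))⁻¹) =O[atTop] fun x ↦ Real.exp (-1 * x) :=
    .of_bound 2 <| .of_forall fun x ↦ by
      simpa [hnorm] using Real.inv_cosh_le_two_mul_exp_neg x
  have hbot : (fun x : ℝ ↦ (cosh (x : ℂ))⁻¹) =O[𝓝[>] 0] fun x ↦ x ^ (-(0 : ℝ)) :=
    .of_bound 1 <| .of_forall fun x ↦ by
      simpa [hnorm] using inv_le_one_of_one_le₀ (Real.one_le_cosh x)
  exact fun s hs ↦ (mellin_differentiableAt_of_isBigO_rpow_exp one_pos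
    (hcont.locallyIntegrable.locallyIntegrableOn _) htop hbot hs).differentiableWithinAt

lemma Complex.differentiableOn_Gamma_re_pos : DifferentiableOn ℂ Gamma {s | 0 < s.re} :=
  fun s hs ↦ (differentiableAt_Gamma s fun m h ↦ by
    simp only [h, mem_ofPred_eq, neg_re, natCast_re] at hs
    linarith [m.cast_nonneg (α := ℝ)]).differentiableWithinAt

lemma Complex.eqOn_re_gt_of_eqOn_re_gt {E : Type*} [NormedAddCommGroup E] [NormedSpace ℂ E]
    [CompleteSpace E] {f g : ℂ → E} {a b : ℝ} (hf : DifferentiableOn ℂ f {s | a < s.re})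
    (hg : DifferentiableOn ℂ g {s | a < s.re}) (hfg : EqOn f g {s | b < s.re}) :
    EqOn f g {s | a < s.re} := by
  have hopen (c : ℝ) : IsOpen {s : ℂ | c < s.re} := isOpen_lt continuous_const continuous_re
  set z₀ : ℂ := max a b + 1
  have hz₀ (c : ℝ) (hc : c ≤ max a b) : z₀ ∈ {s : ℂ | c < s.re} := by
    simp only [z₀, mem_ofPred_eq, add_re, ofReal_re, one_re]; linarith
  refine (hf.analyticOnNhd (hopen a)).eqOn_of_preconnected_of_eventuallyEq
    (hg.analyticOnNhd (hopen a)) (convex_halfSpace_re_gt a).isPreconnected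
    (hz₀ a (le_max_left a b)) ?_
  exact eventuallyEq_of_mem ((hopen b).mem_nhds (hz₀ b (le_max_right a b))) hfg

end

/-- For `Re s > 0`, `2 Γ(s) L(s) = ∫_0^∞ x^{s-1}/cosh x dx`, where `L` is the entire
continuation of `Σ (-1)^n/(2n+1)^s`. -/
theorem two_Gamma_mul_L_integral
    (L : ℂ → ℂ)
    (hsum : ∀ s : ℂ, 1 < s.re →
      L s = ∑' n : ℕ, (-1) ^ n / ((2 * n + 1 : ℕ) : ℂ) ^ s)
    (hanal : Differentiable ℂ L)
    (s : ℂ) (hs : 0 < s.re) :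
    2 * Complex.Gamma s * L s =
      ∫ x in Set.Ioi (0 : ℝ), (x : ℂ) ^ (s - 1) / Complex.cosh x := by
  have hmellin : 2 * Complex.Gamma s * L s = mellin (fun x : ℝ ↦ (Complex.cosh x)⁻¹) s := by
    refine Complex.eqOn_re_gt_of_eqOn_re_gt (f := fun z ↦ 2 * Complex.Gamma z * L z) (b := 1)
      ((Complex.differentiableOn_Gamma_re_pos.const_mul 2).mul hanal.differentiableOn)
      differentiableOn_mellin_inv_cosh (fun z hz ↦ ?_) hs
    beta_reduce
    rw [hsum z hz, mellin_inv_cosh_eq_tsum hz]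
  rw [hmellin]
  rfl
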